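/- arXiv:1705.00060 — 3 statements merged into one kernel-verified Lean document; each statement's English description precedes it below -/
import Mathlib

section
/- Let r > 0, 0 < p < 1, and n be a non-negative integer. Let π be the truncated negative binomial probability mass function on {0,1,...,n}. Then for every function g : ℕ → ℝ, the Stein identity holds: ∑_{i=0}^{n} π_i · ( p(r+i)·g(i+1)·1{i < n} − i·g(i) ) = 0. -/
/-! A weight sequence `w` with `(i + 1) w (i + 1) = a i w i` makes the two halves of the Stein
sum equal after the index shift `i ↦ i + 1`; the negative binomial weights satisfy this with
`a i = p (r + i)`, and normalising by `P(Z ≤ n)` preserves it. -/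

/-- The negative binomial pmf: `P(Z = k)` for `Z ~ NB(r,p)`. -/
noncomputable def nbPmf (r p : ℝ) (k : ℕ) : ℝ :=
  Real.Gamma (r + k) / (Real.Gamma r * k.factorial) * (1 - p) ^ r * p ^ k

/-- The truncated negative binomial pmf on `{0,...,n}`:
`π_i = P(Z = i) / P(Z ≤ n)` for `Z ~ NB(r,p)`. -/
noncomputable def truncNbPmf (r p : ℝ) (n i : ℕ) : ℝ :=
  nbPmf r p i / ∑ j ∈ Finset.range (n + 1), nbPmf r p j

open Finset

theorem sum_mul_stein_eq_zero {w a : ℕ → ℝ} {n : ℕ}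
    (hw : ∀ i < n, ((i : ℝ) + 1) * w (i + 1) = a i * w i) (g : ℕ → ℝ) :
    ∑ i ∈ range (n + 1), w i * (a i * g (i + 1) * (if i < n then 1 else 0) - i * g i) = 0 := by
  have drop_last : ∑ i ∈ range (n + 1), w i * (a i * g (i + 1) * (if i < n then 1 else 0))
      = ∑ i ∈ range n, a i * w i * g (i + 1) := by
    rw [sum_range_succ, if_neg (lt_irrefl n), mul_zero, mul_zero, add_zero]
    refine sum_congr rfl fun i hi => ?_
    rw [if_pos (mem_range.mp hi)]
    ring
  have shift : ∑ i ∈ range (n + 1), w i * (i * g i)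
      = ∑ i ∈ range n, ((i : ℝ) + 1) * w (i + 1) * g (i + 1) := by
    rw [sum_range_succ']
    push_cast
    simp only [zero_mul, mul_zero, add_zero]
    exact sum_congr rfl fun i _ => by ring
  simp only [mul_sub, sum_sub_distrib, drop_last, shift, sub_eq_zero]
  exact sum_congr rfl fun i hi => by rw [hw i (mem_range.mp hi)]

theorem succ_mul_nbPmf_succ (r p : ℝ) {i : ℕ} (hri : r + i ≠ 0) :
    ((i : ℝ) + 1) * nbPmf r p (i + 1) = p * (r + i) * nbPmf r p i := by
  have hGamma : Real.Gamma (r + ((i : ℝ) + 1)) = (r + i) * Real.Gamma (r + i) := by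
    rw [← add_assoc, Real.Gamma_add_one hri]
  rw [nbPmf, nbPmf, Nat.cast_succ, hGamma, Nat.factorial_succ, Nat.cast_mul, Nat.cast_succ,
    pow_succ]
  field_simp

theorem succ_mul_truncNbPmf_succ (r p : ℝ) (n : ℕ) {i : ℕ} (hri : r + i ≠ 0) :
    ((i : ℝ) + 1) * truncNbPmf r p n (i + 1) = p * (r + i) * truncNbPmf r p n i := by
  simp only [truncNbPmf, ← mul_div_assoc, succ_mul_nbPmf_succ r p hri]

theorem truncNb_stein_identity_general (r p : ℝ) (hr : 0 < r)
    (n : ℕ) (g : ℕ → ℝ) :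
    ∑ i ∈ Finset.range (n + 1),
        truncNbPmf r p n i *
          (p * (r + i) * g (i + 1) * (if i < n then (1 : ℝ) else 0) - i * g i) = 0 :=
  sum_mul_stein_eq_zero (fun i _ => succ_mul_truncNbPmf_succ r p n (by positivity)) g

/-- Stein identity for the truncated negative binomial distribution:
`∑_{i=0}^n π_i (p (r+i) g(i+1) 1{i<n} - i g(i)) = 0` for every `g : ℕ → ℝ`. -/
theorem truncNb_stein_identity (r p : ℝ) (hr : 0 < r) (hp0 : 0 < p) (hp1 : p < 1)
    (n : ℕ) (g : ℕ → ℝ) :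
    ∑ i ∈ Finset.range (n + 1),
        truncNbPmf r p n i *
          (p * (r + i) * g (i + 1) * (if i < n then (1 : ℝ) else 0) - i * g i) = 0 :=
  truncNb_stein_identity_general r p hr n g
end

section
/- Let r > 0, 0 < p < 1, and n be a non-negative integer, and let π be the truncated negative binomial probability mass function on {0,1,...,n}. For a subset A ⊆ {0,1,...,n}, let g_A : {0,1,...,n+1} → ℝ be the solution of the Stein equation defined by g_A(0) = 0, g_A(i+1) = ( 1_A(i) − π(A) + i·g_A(i) ) / ( p(r+i) ) for 0 ≤ i < n, and g_A(n+1) = 0, where π(A) = ∑_{j ∈ A} π_j. Then max_{0 ≤ i ≤ n} | g_A(i+1) − g_A(i) | ≤ (1 − π_0)/(p·r). -/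
/-- The solution of the truncated negative binomial Stein equation for the test function
`f = 1_A`, defined by `g 0 = 0`, the forward recursion
`g (i+1) = (1_A(i) - π(A) + i g(i)) / (p (r+i))` for `i < n`, and `g (i+1) = 0` for `i ≥ n`
(in particular `g (n+1) = 0`). -/
noncomputable def steinSolNB (r p : ℝ) (n : ℕ) (A : Finset ℕ) : ℕ → ℝ
  | 0 => 0
  | (i + 1) =>
    if i < n then
      ((if i ∈ A then (1 : ℝ) else 0) - ∑ j ∈ A, truncNbPmf r p n j
          + i * steinSolNB r p n A i) / (p * (r + i))
    else 0


/-!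
Write `F i = ∑ k < i, π k`. Since `(j + 1) π (j + 1) = p (r + j) π j` and `π` sums to `1` on
`{0, …, n}`, the Stein solution is `g_A i = ∑ j ∈ A, π j G(i, j)` with the kernel
`G(i, j) = (1[j < i] - F i) / (i π i)`. So `g_A (i + 1) - g_A i = ∑ j ∈ A, w j` with
`w j = π j (G(i + 1, j) - G(i, j))`. These weights sum to `0` over `{0, …, n}`, and `w j ≤ 0` for
`j ≠ i`: for `j < i` because the tail ratio `(1 - F i) / (i π i)` decreases, for `j > i` because
`F i / (i π i)` increases, which needs `p ≤ 1`. Hence `|g_A (i + 1) - g_A i| ≤ w i`, and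
`w i = (1 - F (i + 1)) / (p (r + i)) + F i / i ≤ (1 - π 0) / (p r)`.
-/

open Finset

section SignedSum

variable {ι : Type*} [DecidableEq ι] {S A : Finset ι} {w : ι → ℝ} {i : ι}

theorem sum_le_of_sum_eq_zero_of_nonpos_of_ne (hA : A ⊆ S) (hi : i ∈ S)
    (hsum : ∑ j ∈ S, w j = 0) (hw : ∀ j ∈ S, j ≠ i → w j ≤ 0) : ∑ j ∈ A, w j ≤ w i := by
  have hrest : ∀ T ⊆ S, ∑ j ∈ T.erase i, w j ≤ 0 := fun T hT =>
    sum_nonpos fun j hj => hw j (hT (mem_of_mem_erase hj)) (ne_of_mem_erase hj)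
  have hwi : 0 ≤ w i := by
    linarith [add_sum_erase S w hi, hrest S subset_rfl]
  calc ∑ j ∈ A, w j ≤ ∑ j ∈ insert i A, w j :=
        sum_le_sum_of_subset_of_nonneg (subset_insert i A) fun j hj hjA => by
          obtain rfl | hjA' := mem_insert.1 hj
          · exact hwi
          · exact absurd hjA' hjA
    _ = w i + ∑ j ∈ (insert i A).erase i, w j := (add_sum_erase _ w (mem_insert_self i A)).symm
    _ ≤ w i := by linarith [hrest (insert i A) (insert_subset hi hA)]

theorem abs_sum_le_of_sum_eq_zero_of_nonpos_of_ne (hA : A ⊆ S) (hi : i ∈ S)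
    (hsum : ∑ j ∈ S, w j = 0) (hw : ∀ j ∈ S, j ≠ i → w j ≤ 0) : |∑ j ∈ A, w j| ≤ w i := by
  have hcompl := sum_sdiff (f := w) hA
  rw [abs_le]
  constructor
  · linarith [sum_le_of_sum_eq_zero_of_nonpos_of_ne (sdiff_subset : S \ A ⊆ S) hi hsum hw]
  · exact sum_le_of_sum_eq_zero_of_nonpos_of_ne hA hi hsum hw

end SignedSum

section RatioRecursion

variable {π : ℕ → ℝ} {p r : ℝ}

theorem mul_sum_range_le_mul_sum_range_succ (hπ : ∀ j, 0 ≤ π j) (hp1 : p ≤ 1)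
    (hrec : ∀ j : ℕ, (j + 1) * π (j + 1) = p * (r + j) * π j) (i : ℕ) :
    p * (r + i) * ∑ j ∈ range i, π j ≤ i * ∑ j ∈ range (i + 1), π j := by
  induction i with
  | zero => simp
  | succ i ih =>
    -- `i F(i + 1) - p (r + i) F(i)` grows by `(1 - p) F(i + 1)` at each step
    have hslack := mul_nonneg (sub_nonneg.2 hp1) (sum_nonneg fun j (_ : j ∈ range (i + 1)) => hπ j)
    rw [sum_range_succ _ (i + 1)]
    rw [sum_range_succ] at ih hslack ⊢
    push_cast
    linarith [hrec i]

theorem mul_sum_range_le_mul_sum_range_shift (hπ : ∀ j, 0 ≤ π j) (hp0 : 0 ≤ p)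
    (hrec : ∀ j : ℕ, (j + 1) * π (j + 1) = p * (r + j) * π j) (i : ℕ) :
    p * r * ∑ j ∈ range i, π j ≤ i * ∑ j ∈ range i, π (j + 1) := by
  rw [mul_sum, mul_sum]
  refine sum_le_sum fun j hj => ?_
  have hji : (j : ℝ) + 1 ≤ i := by exact_mod_cast mem_range.1 hj
  calc p * r * π j ≤ p * (r + j) * π j := by
        gcongr
        exacts [hπ j, le_add_of_nonneg_right j.cast_nonneg]
    _ = (j + 1) * π (j + 1) := (hrec j).symm
    _ ≤ i * π (j + 1) := mul_le_mul_of_nonneg_right hji (hπ _)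

theorem mul_sum_Ico_succ_le (hπ : ∀ j, 0 ≤ π j) (hp0 : 0 ≤ p) (hr : 0 ≤ r)
    (hrec : ∀ j : ℕ, (j + 1) * π (j + 1) = p * (r + j) * π j) (i n : ℕ) :
    i * ∑ j ∈ Ico (i + 1) (n + 1), π j ≤ p * (r + i) * ∑ j ∈ Ico i (n + 1), π j := by
  have hterm : ∀ j, i ≤ j → i * π (j + 1) ≤ p * (r + i) * π j := by
    intro j hij
    have hij' : (i : ℝ) ≤ j := by exact_mod_cast hij
    have hslack : 0 ≤ p * π j * (r * (j + 1 - i) + i) :=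
      mul_nonneg (mul_nonneg hp0 (hπ j)) (by nlinarith [i.cast_nonneg (α := ℝ)])
    refine le_of_mul_le_mul_left ?_ (by positivity : (0 : ℝ) < j + 1)
    linear_combination i * hrec j + hslack
  calc i * ∑ j ∈ Ico (i + 1) (n + 1), π j = ∑ j ∈ Ico i n, i * π (j + 1) := by
        rw [mul_sum, sum_Ico_add' (fun j => (i : ℝ) * π j)]
    _ ≤ ∑ j ∈ Ico i n, p * (r + i) * π j := sum_le_sum fun j hj => hterm j (mem_Ico.1 hj).1
    _ ≤ ∑ j ∈ Ico i (n + 1), p * (r + i) * π j :=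
        sum_le_sum_of_subset_of_nonneg (Ico_subset_Ico_right n.le_succ) fun j _ _ => by
          have := hπ j; positivity
    _ = p * (r + i) * ∑ j ∈ Ico i (n + 1), π j := (mul_sum ..).symm

theorem sum_range_div_mul_le_succ (hπ : ∀ j, 0 < π j) (hp1 : p ≤ 1)
    (hrec : ∀ j : ℕ, (j + 1) * π (j + 1) = p * (r + j) * π j) (i : ℕ) :
    (∑ j ∈ range i, π j) / (i * π i)
      ≤ (∑ j ∈ range (i + 1), π j) / ((i + 1 : ℕ) * π (i + 1)) := by
  have hsucc : (0 : ℝ) < (i + 1 : ℕ) * π (i + 1) := mul_pos (by positivity) (hπ _)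
  rcases i.eq_zero_or_pos with rfl | hi
  · simpa using div_nonneg (hπ 0).le hsucc.le
  have hd : (0 : ℝ) < i * π i := mul_pos (by exact_mod_cast hi) (hπ i)
  rw [div_le_div_iff₀ hd hsucc, Nat.cast_succ, hrec i]
  have := mul_le_mul_of_nonneg_right
    (mul_sum_range_le_mul_sum_range_succ (fun j => (hπ j).le) hp1 hrec i) (hπ i).le
  linarith

theorem sum_Ico_div_mul_succ_le (hπ : ∀ j, 0 < π j) (hp0 : 0 ≤ p) (hr : 0 ≤ r)
    (hrec : ∀ j : ℕ, (j + 1) * π (j + 1) = p * (r + j) * π j) {i : ℕ} (hi : 0 < i) (n : ℕ) :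
    (∑ j ∈ Ico (i + 1) (n + 1), π j) / ((i + 1 : ℕ) * π (i + 1))
      ≤ (∑ j ∈ Ico i (n + 1), π j) / (i * π i) := by
  have hsucc : (0 : ℝ) < (i + 1 : ℕ) * π (i + 1) := mul_pos (by positivity) (hπ _)
  have hd : (0 : ℝ) < i * π i := mul_pos (by exact_mod_cast hi) (hπ i)
  rw [div_le_div_iff₀ hsucc hd, Nat.cast_succ, hrec i]
  have := mul_le_mul_of_nonneg_right
    (mul_sum_Ico_succ_le (fun j => (hπ j).le) hp0 hr hrec i n) (hπ i).le
  linarith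

end RatioRecursion

noncomputable def steinKernel (π : ℕ → ℝ) (i j : ℕ) : ℝ :=
  ((if j < i then 1 else 0) - ∑ k ∈ range i, π k) / (i * π i)

section SteinKernel

variable {π : ℕ → ℝ} {p r : ℝ}

theorem sum_mul_steinKernel (A : Finset ℕ) (i : ℕ) :
    ∑ j ∈ A, π j * steinKernel π i j
      = (∑ j ∈ range i, ((if j ∈ A then 1 else 0) - ∑ k ∈ A, π k) * π j) / (i * π i) := by
  simp only [steinKernel, mul_div_assoc', ← sum_div]
  congr 1
  have hfilter : (range i).filter (· ∈ A) = A.filter (· < i) := by ext; simp [and_comm]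
  simp only [mul_sub, sub_mul, sum_sub_distrib, mul_ite, ite_mul, mul_one, one_mul, mul_zero,
    zero_mul, ← sum_filter, hfilter, ← mul_sum, ← sum_mul]

theorem sum_mul_steinKernel_succ (hπ : ∀ j, 0 < π j)
    (hrec : ∀ j : ℕ, (j + 1) * π (j + 1) = p * (r + j) * π j) (A : Finset ℕ) (i : ℕ) :
    ∑ j ∈ A, π j * steinKernel π (i + 1) j
      = ((if i ∈ A then 1 else 0) - ∑ k ∈ A, π k + i * ∑ j ∈ A, π j * steinKernel π i j)
        / (p * (r + i)) := by
  have hpr : p * (r + i) ≠ 0 := by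
    intro h
    have := hrec i
    rw [h, zero_mul] at this
    exact (mul_pos (by positivity) (hπ (i + 1))).ne' this
  have hπi := (hπ i).ne'
  rw [sum_mul_steinKernel, sum_mul_steinKernel, sum_range_succ, Nat.cast_succ, hrec i]
  rcases i.eq_zero_or_pos with rfl | hi
  · field_simp
    simp
  · have : (i : ℝ) ≠ 0 := by positivity
    field_simp
    ring

theorem one_sub_sum_range_eq_sum_Ico {n k : ℕ} (hnorm : ∑ j ∈ range (n + 1), π j = 1)
    (hk : k ≤ n + 1) : 1 - ∑ j ∈ range k, π j = ∑ j ∈ Ico k (n + 1), π j := by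
  rw [← hnorm, ← sum_range_add_sum_Ico _ hk]
  ring

theorem sum_range_mul_steinKernel_eq_zero {n i : ℕ} (hnorm : ∑ j ∈ range (n + 1), π j = 1)
    (hi : i ≤ n + 1) : ∑ j ∈ range (n + 1), π j * steinKernel π i j = 0 := by
  rw [sum_mul_steinKernel, hnorm]
  refine div_eq_zero_iff.2 (Or.inl (sum_eq_zero fun j hj => ?_))
  simp [show j < n + 1 by simp at hj; omega]

theorem steinKernel_succ_sub_nonpos (hπ : ∀ j, 0 < π j) (hp0 : 0 ≤ p) (hp1 : p ≤ 1) (hr : 0 ≤ r)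
    (hrec : ∀ j : ℕ, (j + 1) * π (j + 1) = p * (r + j) * π j) {n i j : ℕ}
    (hnorm : ∑ j ∈ range (n + 1), π j = 1) (hi : i ≤ n) (hji : j ≠ i) :
    steinKernel π (i + 1) j - steinKernel π i j ≤ 0 := by
  unfold steinKernel
  rcases hji.lt_or_gt with hlt | hgt
  · rw [if_pos (by omega), if_pos hlt, one_sub_sum_range_eq_sum_Ico hnorm (by omega),
      one_sub_sum_range_eq_sum_Ico hnorm (by omega)]
    exact sub_nonpos.2 (sum_Ico_div_mul_succ_le hπ hp0 hr hrec (by omega) n)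
  · rw [if_neg (by omega), if_neg (by omega), zero_sub, zero_sub, neg_div, neg_div]
    linarith [sum_range_div_mul_le_succ hπ hp1 hrec i]

theorem mul_steinKernel_succ_sub_self_le (hπ : ∀ j, 0 < π j) (hp0 : 0 < p) (hr : 0 < r)
    (hrec : ∀ j : ℕ, (j + 1) * π (j + 1) = p * (r + j) * π j) {n i : ℕ}
    (hnorm : ∑ j ∈ range (n + 1), π j = 1) (hi : i ≤ n) :
    π i * (steinKernel π (i + 1) i - steinKernel π i i) ≤ (1 - π 0) / (p * r) := by
  have hpr : 0 < p * r := mul_pos hp0 hr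
  have hπi := (hπ i).ne'
  have htail : π i * steinKernel π (i + 1) i
      = (∑ j ∈ Ico (i + 1) (n + 1), π j) / (p * (r + i)) := by
    rw [steinKernel, if_pos i.lt_succ_self, one_sub_sum_range_eq_sum_Ico hnorm (by omega),
      Nat.cast_succ, hrec i]
    field_simp
  have hhead : π i * steinKernel π i i = -(∑ j ∈ range i, π j) / i := by
    rw [steinKernel, if_neg (lt_irrefl i), zero_sub, mul_div_assoc', mul_comm (π i),
      mul_div_mul_right _ _ hπi]
  have htail_le : (∑ j ∈ Ico (i + 1) (n + 1), π j) / (p * (r + i))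
      ≤ (∑ j ∈ Ico (i + 1) (n + 1), π j) / (p * r) :=
    div_le_div_of_nonneg_left (sum_nonneg fun j _ => (hπ j).le) hpr
      (by nlinarith [i.cast_nonneg (α := ℝ)])
  have hhead_le : (∑ j ∈ range i, π j) / i ≤ (∑ j ∈ range (i + 1), π j - π 0) / (p * r) := by
    rcases i.eq_zero_or_pos with rfl | hi0
    · simp
    rw [div_le_div_iff₀ (by exact_mod_cast hi0) hpr, sum_range_succ', add_sub_cancel_right]
    linarith [mul_sum_range_le_mul_sum_range_shift (fun j => (hπ j).le) hp0.le hrec i]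
  have htotal : (∑ j ∈ Ico (i + 1) (n + 1), π j) + (∑ j ∈ range (i + 1), π j - π 0)
      = 1 - π 0 := by
    rw [← hnorm, ← sum_range_add_sum_Ico _ (by omega : i + 1 ≤ n + 1)]
    ring
  calc π i * (steinKernel π (i + 1) i - steinKernel π i i)
      = (∑ j ∈ Ico (i + 1) (n + 1), π j) / (p * (r + i)) + (∑ j ∈ range i, π j) / i := by
        rw [mul_sub, htail, hhead, neg_div, sub_neg_eq_add]
    _ ≤ (∑ j ∈ Ico (i + 1) (n + 1), π j) / (p * r)
          + (∑ j ∈ range (i + 1), π j - π 0) / (p * r) := add_le_add htail_le hhead_le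
    _ = (1 - π 0) / (p * r) := by rw [← add_div, htotal]

end SteinKernel

section TruncatedNegativeBinomial

variable {r p : ℝ}

theorem nbPmf_pos (hr : 0 < r) (hp0 : 0 < p) (hp1 : p < 1) (k : ℕ) : 0 < nbPmf r p k := by
  have := Real.Gamma_pos_of_pos (by positivity : 0 < r + k)
  have := Real.Gamma_pos_of_pos hr
  have := Real.rpow_pos_of_pos (sub_pos.2 hp1) r
  unfold nbPmf
  positivity

theorem nbPmf_succ (hr : 0 < r) (k : ℕ) :
    (k + 1) * nbPmf r p (k + 1) = p * (r + k) * nbPmf r p k := by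
  have := (Real.Gamma_pos_of_pos hr).ne'
  have := (Real.Gamma_pos_of_pos (by positivity : 0 < r + k)).ne'
  have hGamma : Real.Gamma (r + (k + 1 : ℕ)) = (r + k) * Real.Gamma (r + k) := by
    rw [Nat.cast_succ, ← add_assoc, Real.Gamma_add_one (by positivity)]
  unfold nbPmf
  rw [hGamma, Nat.factorial_succ, Nat.cast_mul, Nat.cast_succ, pow_succ]
  field_simp

variable (n : ℕ)

theorem truncNbPmf_pos (hr : 0 < r) (hp0 : 0 < p) (hp1 : p < 1) (k : ℕ) :
    0 < truncNbPmf r p n k :=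
  div_pos (nbPmf_pos hr hp0 hp1 k)
    (sum_pos (fun j _ => nbPmf_pos hr hp0 hp1 j) nonempty_range_add_one)

theorem truncNbPmf_succ (hr : 0 < r) (k : ℕ) :
    (k + 1) * truncNbPmf r p n (k + 1) = p * (r + k) * truncNbPmf r p n k := by
  simp only [truncNbPmf, mul_div_assoc', nbPmf_succ hr]

theorem sum_truncNbPmf (hr : 0 < r) (hp0 : 0 < p) (hp1 : p < 1) :
    ∑ k ∈ range (n + 1), truncNbPmf r p n k = 1 := by
  simp only [truncNbPmf, ← sum_div]
  exact div_self (sum_pos (fun j _ => nbPmf_pos hr hp0 hp1 j) nonempty_range_add_one).ne'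

theorem steinSolNB_eq_sum_mul_steinKernel (hr : 0 < r) (hp0 : 0 < p) (hp1 : p < 1)
    {A : Finset ℕ} (hA : A ⊆ range (n + 1)) {i : ℕ} (hi : i ≤ n + 1) :
    steinSolNB r p n A i = ∑ j ∈ A, truncNbPmf r p n j * steinKernel (truncNbPmf r p n) i j := by
  induction i with
  | zero => simp [steinSolNB, steinKernel]
  | succ i ih =>
    rcases (Nat.lt_succ_iff.1 hi).lt_or_eq with hin | rfl
    · rw [steinSolNB, if_pos hin, ih (by omega),
        sum_mul_steinKernel_succ (truncNbPmf_pos n hr hp0 hp1) (truncNbPmf_succ n hr)]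
    · rw [steinSolNB, if_neg (lt_irrefl _)]
      refine (sum_eq_zero fun j hj => ?_).symm
      rw [steinKernel, if_pos (mem_range.1 (hA hj)), sum_truncNbPmf _ hr hp0 hp1]
      simp

end TruncatedNegativeBinomial

/-- Stein factor bound for the truncated negative binomial distribution:
the first difference of the Stein solution is bounded by `(1 - π₀)/(p r)`. -/
theorem truncNb_stein_factor (r p : ℝ) (hr : 0 < r) (hp0 : 0 < p) (hp1 : p < 1)
    (n : ℕ) (A : Finset ℕ) (hA : A ⊆ Finset.range (n + 1)) :
    ∀ i ≤ n, |steinSolNB r p n A (i + 1) - steinSolNB r p n A i|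
      ≤ (1 - truncNbPmf r p n 0) / (p * r) := by
  intro i hi
  have hπ := truncNbPmf_pos n hr hp0 hp1
  have hrec := truncNbPmf_succ (p := p) n hr
  have hnorm := sum_truncNbPmf n hr hp0 hp1
  rw [steinSolNB_eq_sum_mul_steinKernel n hr hp0 hp1 hA (by omega),
    steinSolNB_eq_sum_mul_steinKernel n hr hp0 hp1 hA (by omega), ← sum_sub_distrib]
  simp only [← mul_sub]
  refine (abs_sum_le_of_sum_eq_zero_of_nonpos_of_ne hA (mem_range.2 (by omega)) ?_ ?_).trans
    (mul_steinKernel_succ_sub_self_le hπ hp0 hr hrec hnorm hi)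
  · simp only [mul_sub, sum_sub_distrib, sub_eq_zero,
      sum_range_mul_steinKernel_eq_zero hnorm (by omega : i + 1 ≤ n + 1),
      sum_range_mul_steinKernel_eq_zero hnorm (by omega : i ≤ n + 1)]
  · exact fun j _ hji => mul_nonpos_of_nonneg_of_nonpos (hπ j).le
      (steinKernel_succ_sub_nonpos hπ hp0.le hp1.le hr.le hrec hnorm hi hji)
end

section
/- Let λ > 0 and n be a non-negative integer, and let π be the truncated Poisson probability mass function on {0,1,...,n}. Then for every integer i with 1 ≤ i ≤ n: ( ∑_{j=i+1}^{n} π_j ) / λ + ( ∑_{j=0}^{i-1} π_j ) / i ≤ (1 − π_0)/λ, where the first sum is interpreted as 0 when i = n. -/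
/-- The Poisson pmf: `P(Z = k)` for `Z ~ Po(λ)`. -/
noncomputable def poissonPmf (lam : ℝ) (k : ℕ) : ℝ :=
  Real.exp (-lam) * lam ^ k / k.factorial

/-- The truncated Poisson pmf on `{0,...,n}`:
`π_i = P(Z = i) / P(Z ≤ n)` for `Z ~ Po(λ)`. -/
noncomputable def truncPoissonPmf (lam : ℝ) (n i : ℕ) : ℝ :=
  poissonPmf lam i / ∑ j ∈ Finset.range (n + 1), poissonPmf lam j

/-!
The Poisson weights satisfy `λ π_j = (j + 1) π_{j+1}`, and so do their truncations. Hence for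
`j < i` we get `π_j / i ≤ π_{j+1} / λ`, so the second sum is at most `(π_1 + ⋯ + π_i) / λ`;
adding the first sum gives `(π_1 + ⋯ + π_n) / λ = (1 - π_0) / λ`.
-/

open Finset

theorem poissonPmf_nonneg {lam : ℝ} (hlam : 0 ≤ lam) (k : ℕ) : 0 ≤ poissonPmf lam k := by
  unfold poissonPmf
  positivity

theorem poissonPmf_zero_pos (lam : ℝ) : 0 < poissonPmf lam 0 := by
  simp [poissonPmf, Real.exp_pos]

theorem mul_poissonPmf_eq_succ_mul (lam : ℝ) (k : ℕ) :
    lam * poissonPmf lam k = (k + 1) * poissonPmf lam (k + 1) := by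
  simp only [poissonPmf, Nat.factorial_succ, Nat.cast_mul, Nat.cast_succ, pow_succ]
  field_simp

theorem truncPoissonPmf_nonneg {lam : ℝ} (hlam : 0 ≤ lam) (n k : ℕ) :
    0 ≤ truncPoissonPmf lam n k :=
  div_nonneg (poissonPmf_nonneg hlam k) (sum_nonneg fun j _ => poissonPmf_nonneg hlam j)

theorem mul_truncPoissonPmf_eq_succ_mul (lam : ℝ) (n k : ℕ) :
    lam * truncPoissonPmf lam n k = (k + 1) * truncPoissonPmf lam n (k + 1) := by
  simp only [truncPoissonPmf, mul_div_assoc', mul_poissonPmf_eq_succ_mul]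

theorem sum_range_truncPoissonPmf {lam : ℝ} (hlam : 0 ≤ lam) (n : ℕ) :
    ∑ j ∈ range (n + 1), truncPoissonPmf lam n j = 1 := by
  have hmass : 0 < ∑ j ∈ range (n + 1), poissonPmf lam j :=
    sum_pos' (fun j _ => poissonPmf_nonneg hlam j) ⟨0, by simp, poissonPmf_zero_pos lam⟩
  simp only [truncPoissonPmf, ← sum_div]
  exact div_self hmass.ne'

section Recurrence

variable {lam : ℝ} {f : ℕ → ℝ}

theorem sum_range_div_le_sum_range_succ_div (hlam : 0 < lam) (hf : ∀ j, 0 ≤ f j)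
    (hrec : ∀ j : ℕ, lam * f j = (j + 1) * f (j + 1)) (i : ℕ) :
    (∑ j ∈ range i, f j) / i ≤ (∑ j ∈ range i, f (j + 1)) / lam := by
  simp only [sum_div]
  refine sum_le_sum fun j hj => ?_
  have hji : (j : ℝ) + 1 ≤ i := by exact_mod_cast mem_range.mp hj
  rw [div_le_div_iff₀ ((Nat.cast_add_one_pos j).trans_le hji) hlam, mul_comm (f j), hrec,
    mul_comm (f (j + 1))]
  exact mul_le_mul_of_nonneg_right hji (hf _)

theorem sum_Icc_div_add_sum_range_div_le (hlam : 0 < lam) (hf : ∀ j, 0 ≤ f j)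
    (hrec : ∀ j : ℕ, lam * f j = (j + 1) * f (j + 1)) {n i : ℕ} (hin : i ≤ n)
    (hmass : ∑ j ∈ range (n + 1), f j = 1) :
    (∑ j ∈ Icc (i + 1) n, f j) / lam + (∑ j ∈ range i, f j) / i ≤ (1 - f 0) / lam := by
  have hsplit : 1 - f 0 = ∑ j ∈ range i, f (j + 1) + ∑ j ∈ Icc (i + 1) n, f j := by
    rw [← hmass, ← sum_range_add_sum_Ico f (by omega : i + 1 ≤ n + 1), sum_range_succ',
      Ico_add_one_right_eq_Icc]
    ring
  calc (∑ j ∈ Icc (i + 1) n, f j) / lam + (∑ j ∈ range i, f j) / i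
      ≤ (∑ j ∈ Icc (i + 1) n, f j) / lam + (∑ j ∈ range i, f (j + 1)) / lam := by
        gcongr _ + ?_
        exact sum_range_div_le_sum_range_succ_div hlam hf hrec i
    _ = (1 - f 0) / lam := by rw [hsplit]; ring

end Recurrence

theorem truncPoisson_stein_factor_inequality_general (lam : ℝ) (hlam : 0 < lam)
    (n : ℕ) (i : ℕ) (hin : i ≤ n) :
    (∑ j ∈ Finset.Icc (i + 1) n, truncPoissonPmf lam n j) / lam
        + (∑ j ∈ Finset.range i, truncPoissonPmf lam n j) / i
      ≤ (1 - truncPoissonPmf lam n 0) / lam :=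
  sum_Icc_div_add_sum_range_div_le hlam (truncPoissonPmf_nonneg hlam.le n)
    (mul_truncPoissonPmf_eq_succ_mul lam n) hin (sum_range_truncPoissonPmf hlam.le n)

/-- The key inequality in the proof of the truncated Poisson Stein factor bound:
for `1 ≤ i ≤ n`, `(π_{i+1} + ⋯ + π_n)/λ + (π_0 + ⋯ + π_{i-1})/i ≤ (1 - π₀)/λ`. -/
theorem truncPoisson_stein_factor_inequality (lam : ℝ) (hlam : 0 < lam)
    (n : ℕ) (i : ℕ) (hi1 : 1 ≤ i) (hin : i ≤ n) :
    (∑ j ∈ Finset.Icc (i + 1) n, truncPoissonPmf lam n j) / lam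
        + (∑ j ∈ Finset.range i, truncPoissonPmf lam n j) / i
      ≤ (1 - truncPoissonPmf lam n 0) / lam :=
  truncPoisson_stein_factor_inequality_general lam hlam n i hin
end
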